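/- arXiv:1610.05215 — 2 statements merged into one kernel-verified Lean document; each statement's English description precedes it below -/
import Mathlib

section
/- Let a>0, b>0, τ≥0, χ≥0 and c < 2√a. Then the chemotaxis system has no traveling wave solution with speed c connecting (a/b, a/b) and (0,0); that is, there exist no nonnegative C² functions U,V:ℝ→ℝ satisfying U'' + cU' − χ(UV')' + U(a−bU) = 0 and V'' + τcV' − V + U = 0 on ℝ with (U(x),V(x)) → (a/b, a/b) as x→−∞ and (U(x),V(x)) → (0,0) as x→+∞. -/
/-! A wave profile `U` is positive: a zero of `U ≥ 0` is a double zero of the linear equation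
`U'' = A U' + B U` that `U` satisfies, so `U ≡ 0` by uniqueness, against `U → a/b` at `-∞`.
Since `V' → 0` at `+∞`, the coefficients tend to `A → -c` and `B → -a`. For `c < 2√a` the
quadratic `r² + c r + a` dominates a multiple of `1 + r²` on `r ≤ 0`, so far out the logarithmic
derivative `r = U'/U` obeys `r' ≤ -δ (1 + r²)` as long as `r ≤ 0`. As `U → 0`, `r` is nonpositive
somewhere far out, and from there on `arctan r` decreases at a fixed rate forever, which a
function with values in `(-π/2, π/2)` cannot do. -/

open Real Filter

/-- A traveling wave solution with speed `c` of the chemotaxis system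
`u_t = u_xx − χ(u v_x)_x + u(a−bu)`, `τ v_t = v_xx − v + u`,
connecting `(a/b, a/b)` and `(0,0)`. -/
def IsTravelingWave (a b χ τ c : ℝ) (U V : ℝ → ℝ) : Prop :=
  ContDiff ℝ 2 U ∧ ContDiff ℝ 2 V ∧ (∀ x, 0 ≤ U x) ∧ (∀ x, 0 ≤ V x) ∧
  (∀ x, deriv (deriv U) x + c * deriv U x
      - χ * deriv (fun y => U y * deriv V y) x + U x * (a - b * U x) = 0) ∧
  (∀ x, deriv (deriv V) x + τ * c * deriv V x - V x + U x = 0) ∧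
  Tendsto U atBot (nhds (a / b)) ∧ Tendsto V atBot (nhds (a / b)) ∧
  Tendsto U atTop (nhds 0) ∧ Tendsto V atTop (nhds 0)

open Set Topology

theorem exists_pos_mul_one_add_sq_le {a c : ℝ} (ha : 0 < a) (hc : c < 2 * √a) :
    ∃ δ > 0, ∀ r ≤ 0, δ * (1 + r ^ 2) ≤ r ^ 2 + c * r + a := by
  set c' := max c 0
  have hc' : c' ^ 2 < 4 * a := by
    have h := pow_lt_pow_left₀ (max_lt hc (by positivity)) (le_max_right c 0) two_ne_zero
    rwa [mul_pow, sq_sqrt ha.le, show (2 : ℝ) ^ 2 = 4 by norm_num] at h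
  set δ := (4 * a - c' ^ 2) / (4 * (1 + a))
  have hδ : 0 < δ := by positivity
  have hδ1 : δ < 1 := by
    rw [div_lt_one (by positivity)]
    nlinarith [sq_nonneg c']
  -- `4 (1 - δ) ((1 - δ) r² + c' r + a - δ) = (2 (1 - δ) r + c')² + 4 δ²` by the choice of `δ`
  have hδeq : 4 * a - c' ^ 2 = 4 * δ * (1 + a) := by
    simp only [δ]; field_simp
  refine ⟨δ, hδ, fun r hr => ?_⟩
  have hcr : c' * r ≤ c * r := mul_le_mul_of_nonpos_right (le_max_left c 0) hr
  nlinarith [sq_nonneg (2 * (1 - δ) * r + c'), mul_pos hδ hδ, sub_pos.2 hδ1]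

theorem false_of_hasDerivAt_le_neg_mul_one_add_sq {r r' : ℝ → ℝ} {x₁ δ : ℝ} (hδ : 0 < δ)
    (hr : ∀ x ≥ x₁, HasDerivAt r (r' x) x) (hx₁ : r x₁ ≤ 0)
    (hr' : ∀ x ≥ x₁, r x ≤ 0 → r' x ≤ -δ * (1 + r x ^ 2)) : False := by
  set x₂ := x₁ + 2 * π / δ
  have hx₂ : x₁ ≤ x₂ := le_add_of_nonneg_right (by positivity)
  have harctan (x : ℝ) (hx : x ≥ x₁) :
      HasDerivAt (fun y => arctan (r y)) (1 / (1 + r x ^ 2) * r' x) x :=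
    (hr x hx).arctan
  -- `arctan ∘ r` stays below the line of slope `-δ/2` through its value at `x₁`: wherever it
  -- touches that line, `r ≤ 0` and so `(arctan ∘ r)' ≤ -δ`. Over `[x₁, x₂]` the line drops by `π`.
  have hfence := image_le_of_deriv_right_lt_deriv_boundary (a := x₁) (b := x₂)
    (B := fun x => arctan (r x₁) - δ / 2 * (x - x₁)) (B' := fun _ => -(δ / 2))
    (HasDerivAt.continuousOn fun x hx => harctan x hx.1)
    (fun x hx => (harctan x hx.1).hasDerivWithinAt) (by simp)
    (fun x => by simpa using ((hasDerivAt_id x).sub_const x₁).const_mul (δ / 2) |>.const_sub _)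
    (fun x hx heq => by
      have hrx : r x ≤ 0 := by
        rw [← arctan_le_zero, heq]
        nlinarith [arctan_le_zero.2 hx₁, hx.1]
      have hpos : 0 < 1 + r x ^ 2 := by positivity
      rw [one_div_mul_eq_div, div_lt_iff₀ hpos]
      nlinarith [hr' x hx.1 hrx])
    ⟨hx₂, le_rfl⟩
  have hdrop : δ / 2 * (x₂ - x₁) = π := by simp only [x₂]; field_simp; ring
  linarith [neg_pi_div_two_lt_arctan (r x₂), arctan_lt_pi_div_two (r x₁)]

theorem abs_le_exp_abs_mul_of_hasDerivAt {V W g : ℝ → ℝ} {k η x : ℝ}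
    (hV : ∀ t, HasDerivAt V (W t) t) (hW : ∀ t, HasDerivAt W (g t - k * W t) t)
    (hg : ∀ t ∈ Icc x (x + 1), |g t| ≤ η) :
    |W x| ≤ exp |k| * (|V (x + 1) - V x| + η) := by
  obtain ⟨ξ, hξ, hWξ⟩ := exists_hasDerivAt_eq_slope V W (lt_add_one x)
    (HasDerivAt.continuousOn fun t _ => hV t) fun t _ => hV t
  rw [add_sub_cancel_left, div_one] at hWξ
  have hexp : ∀ t ∈ Icc x (x + 1), exp (k * (t - x)) ≤ exp |k| := fun t ht =>
    exp_le_exp.2 <| by nlinarith [le_abs_self k, abs_nonneg k, ht.1, ht.2]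
  -- the integrating factor `exp (k (t - x))` turns `W' + k W = g` into `E' = exp (k (t - x)) g`
  set E := fun t => exp (k * (t - x)) * W t
  have hE (t : ℝ) : HasDerivAt E (exp (k * (t - x)) * g t) t := by
    refine ((((hasDerivAt_id' t).sub_const x).const_mul k).exp.fun_mul (hW t)).congr_deriv ?_
    ring
  have hEξ : |E ξ - E x| ≤ exp |k| * η := by
    have h := norm_image_sub_le_of_norm_deriv_le_segment' (f := E) (C := exp |k| * η)
      (fun t _ => (hE t).hasDerivWithinAt)
      (fun t ht => by
        rw [norm_mul, norm_of_nonneg (exp_pos _).le]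
        exact mul_le_mul (hexp t (Ico_subset_Icc_self ht)) (hg t (Ico_subset_Icc_self ht))
          (norm_nonneg _) (exp_pos _).le) ξ ⟨hξ.1.le, hξ.2.le⟩
    have hη : 0 ≤ η := (abs_nonneg _).trans (hg x ⟨le_rfl, by linarith⟩)
    exact h.trans (by nlinarith [hξ.2, exp_pos |k|, mul_nonneg (exp_pos |k|).le hη])
  have hEx : E x = W x := by simp [E]
  have hEξ' : |E ξ| ≤ exp |k| * |V (x + 1) - V x| := by
    rw [abs_mul, abs_of_pos (exp_pos _), ← hWξ]
    exact mul_le_mul_of_nonneg_right (hexp ξ ⟨hξ.1.le, hξ.2.le⟩) (abs_nonneg _)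
  calc |W x| = |E ξ - (E ξ - E x)| := by rw [sub_sub_cancel, hEx]
    _ ≤ |E ξ| + |E ξ - E x| := abs_sub _ _
    _ ≤ exp |k| * (|V (x + 1) - V x| + η) := by linarith

theorem tendsto_zero_of_hasDerivAt_of_tendsto {V W g : ℝ → ℝ} {k L : ℝ}
    (hV : ∀ t, HasDerivAt V (W t) t) (hW : ∀ t, HasDerivAt W (g t - k * W t) t)
    (hVL : Tendsto V atTop (𝓝 L)) (hg : Tendsto g atTop (𝓝 0)) :
    Tendsto W atTop (𝓝 0) := by
  rw [Metric.tendsto_nhds]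
  intro ε hε
  set η := ε / (3 * exp |k|)
  have hη : 0 < η := by positivity
  have hΔ : Tendsto (fun x => V (x + 1) - V x) atTop (𝓝 0) := by
    simpa using (hVL.comp (tendsto_atTop_add_const_right _ 1 tendsto_id)).sub hVL
  obtain ⟨N, hN⟩ := eventually_atTop.1 (Metric.tendsto_nhds.1 hg η hη)
  filter_upwards [Metric.tendsto_nhds.1 hΔ η hη, eventually_ge_atTop N] with x hx hxN
  rw [Real.dist_eq, sub_zero] at hx ⊢
  have hWx := abs_le_exp_abs_mul_of_hasDerivAt hV hW fun t ht => by
    simpa using (hN t (hxN.trans ht.1)).le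
  have hη3 : exp |k| * (3 * η) = ε := by simp only [η]; field_simp
  nlinarith [exp_pos |k|]

theorem eq_zero_of_hasDerivAt_of_eq_zero {U U' A B : ℝ → ℝ}
    (hA : Continuous A) (hB : Continuous B)
    (hU : ∀ x, HasDerivAt U (U' x) x) (hU' : ∀ x, HasDerivAt U' (A x * U' x + B x * U x) x)
    {x₀ : ℝ} (h₀ : U x₀ = 0) (h₀' : U' x₀ = 0) (x : ℝ) : U x = 0 := by
  set s := min x x₀ - 1
  set t := max x x₀ + 1
  obtain ⟨M, hM⟩ := (isCompact_Icc (a := s) (b := t)).exists_bound_of_continuousOn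
    (hA.abs.add hB.abs).continuousOn
  -- `(U, U')` solves a first-order system whose right-hand side is Lipschitz on `[s, t]`
  have hv : ∀ y ∈ Ioo s t, LipschitzOnWith (Real.toNNReal (1 + M))
      (fun X : ℝ × ℝ => (X.2, A y * X.2 + B y * X.1)) univ := by
    intro y hy
    have hMy : |A y| + |B y| ≤ M := by
      simpa [abs_of_nonneg (add_nonneg (abs_nonneg (A y)) (abs_nonneg (B y)))] using
        hM y (Ioo_subset_Icc_self hy)
    have hM0 : 0 ≤ M := (add_nonneg (abs_nonneg _) (abs_nonneg _)).trans hMy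
    refine (LipschitzWith.of_dist_le_mul fun X Y => ?_).lipschitzOnWith
    rw [dist_eq_norm, dist_eq_norm, Real.coe_toNNReal _ (by positivity)]
    set D := X - Y
    have h1 : |D.1| ≤ ‖D‖ := norm_fst_le D
    have h2 : |D.2| ≤ ‖D‖ := norm_snd_le D
    have hD : (X.2, A y * X.2 + B y * X.1) - (Y.2, A y * Y.2 + B y * Y.1)
        = (D.2, A y * D.2 + B y * D.1) := by
      simp only [D, Prod.fst_sub, Prod.snd_sub, Prod.mk_sub_mk]; ring_nf
    rw [hD, norm_prod_le_iff, Real.norm_eq_abs, Real.norm_eq_abs]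
    constructor
    · nlinarith [norm_nonneg D]
    · calc |A y * D.2 + B y * D.1| ≤ |A y| * |D.2| + |B y| * |D.1| := by
            rw [← abs_mul, ← abs_mul]; exact abs_add_le _ _
        _ ≤ (|A y| + |B y|) * ‖D‖ := by
            nlinarith [abs_nonneg (A y), abs_nonneg (B y)]
        _ ≤ (1 + M) * ‖D‖ := by nlinarith [norm_nonneg D]
  have hx₀ : x₀ ∈ Ioo s t := ⟨by simp only [s]; linarith [min_le_right x x₀],
    by simp only [t]; linarith [le_max_right x x₀]⟩
  have hx : x ∈ Icc s t :=
    ⟨by simp only [s]; linarith [min_le_left x x₀], by simp only [t]; linarith [le_max_left x x₀]⟩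
  have heq := ODE_solution_unique_of_mem_Icc hv hx₀ (f := fun y => (U y, U' y)) (g := fun _ => 0)
    (HasDerivAt.continuousOn fun y _ => (hU y).prodMk (hU' y))
    (fun y _ => (hU y).prodMk (hU' y)) (fun _ _ => trivial) continuousOn_const
    (fun y _ => (hasDerivAt_const y (0 : ℝ × ℝ)).congr_deriv (by ext <;> simp))
    (fun _ _ => trivial) (by simp [h₀, h₀'])
  exact congrArg Prod.fst (heq hx)

theorem not_tendsto_zero_of_pos_of_lt_two_sqrt {U U' A B : ℝ → ℝ} {a c : ℝ}
    (ha : 0 < a) (hc : c < 2 * √a)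
    (hU : ∀ x, HasDerivAt U (U' x) x) (hU' : ∀ x, HasDerivAt U' (A x * U' x + B x * U x) x)
    (hA : Tendsto A atTop (𝓝 (-c))) (hB : Tendsto B atTop (𝓝 (-a))) (hpos : ∀ x, 0 < U x) :
    ¬ Tendsto U atTop (𝓝 0) := by
  intro hU0
  obtain ⟨δ, hδ, hq⟩ := exists_pos_mul_one_add_sq_le ha hc
  have hA' := Metric.tendsto_nhds.1 hA (δ / 4) (by positivity)
  have hB' := Metric.tendsto_nhds.1 hB (δ / 4) (by positivity)
  obtain ⟨R, hR⟩ := (hA'.and hB').exists_forall_of_atTop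
  obtain ⟨y, hy, hRy⟩ := ((hU0.eventually_lt_const (hpos R)).and (eventually_gt_atTop R)).exists
  obtain ⟨x₁, hx₁, hslope⟩ := exists_hasDerivAt_eq_slope U U' hRy
    (HasDerivAt.continuousOn fun x _ => hU x) fun x _ => hU x
  -- the logarithmic derivative `U' / U` solves the Riccati equation `r' = A r + B - r²`
  have hr (x : ℝ) :
      HasDerivAt (fun y => U' y / U y) (A x * (U' x / U x) + B x - (U' x / U x) ^ 2) x :=
    ((hU' x).div (hU x) (hpos x).ne').congr_deriv (by have := (hpos x).ne'; field_simp)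
  refine false_of_hasDerivAt_le_neg_mul_one_add_sq (half_pos hδ) (fun x (_ : x ≥ x₁) => hr x) ?_ ?_
  · refine div_nonpos_of_nonpos_of_nonneg ?_ (hpos x₁).le
    rw [hslope]
    exact div_nonpos_of_nonpos_of_nonneg (by linarith) (by linarith [hx₁.1])
  · intro x hx hrx
    obtain ⟨hAx, hBx⟩ := hR x (by linarith [hx₁.1])
    rw [Real.dist_eq, sub_neg_eq_add, abs_lt] at hAx hBx
    nlinarith [hq _ hrx, sq_nonneg (U' x / U x + 1 / 2)]

namespace IsTravelingWave

variable {a b χ τ c : ℝ} {U V : ℝ → ℝ}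

theorem tendsto_deriv_snd (h : IsTravelingWave a b χ τ c U V) :
    Tendsto (deriv V) atTop (𝓝 0) := by
  obtain ⟨-, hV, -, -, -, hVeq, -, -, hU0, hV0⟩ := h
  refine tendsto_zero_of_hasDerivAt_of_tendsto (g := fun x => V x - U x) (k := τ * c)
    (fun x => (hV.differentiable two_ne_zero x).hasDerivAt) (fun x => ?_) hV0
    (by simpa using hV0.sub hU0)
  refine (hV.differentiable_deriv_two x).hasDerivAt.congr_deriv ?_
  linarith [hVeq x]

theorem hasDerivAt_deriv_fst (h : IsTravelingWave a b χ τ c U V) (x : ℝ) :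
    HasDerivAt (deriv U) ((-c + χ * deriv V x) * deriv U x
      + (χ * (V x - U x - τ * c * deriv V x) - a + b * U x) * U x) x := by
  obtain ⟨hU, hV, -, -, hUeq, hVeq, -⟩ := h
  refine (hU.differentiable_deriv_two x).hasDerivAt.congr_deriv ?_
  have hprod := deriv_fun_mul (hU.differentiable two_ne_zero x) (hV.differentiable_deriv_two x)
  linear_combination hUeq x + χ * hprod + χ * U x * hVeq x

theorem pos (h : IsTravelingWave a b χ τ c U V) (ha : 0 < a) (hb : 0 < b) (x₀ : ℝ) :
    0 < U x₀ := by
  obtain ⟨hU, hV, hU0, -, -, -, hUbot, -⟩ := id h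
  refine (hU0 x₀).lt_of_ne' fun h₀ => ?_
  have hmin : IsLocalMin U x₀ := Eventually.of_forall fun y => h₀ ▸ hU0 y
  have hUc := hU.continuous
  have hVc := hV.continuous
  have hV'c := hV.continuous_deriv one_le_two
  have hzero : U = 0 := funext <| eq_zero_of_hasDerivAt_of_eq_zero
    (A := fun x => -c + χ * deriv V x)
    (B := fun x => χ * (V x - U x - τ * c * deriv V x) - a + b * U x)
    (by fun_prop) (by fun_prop) (fun x => (hU.differentiable two_ne_zero x).hasDerivAt)
    h.hasDerivAt_deriv_fst h₀ hmin.deriv_eq_zero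
  rw [hzero] at hUbot
  exact (div_pos ha hb).ne' (tendsto_nhds_unique hUbot tendsto_const_nhds)

end IsTravelingWave

theorem no_traveling_wave_of_speed_lt_general (a b τ χ c : ℝ) (ha : 0 < a) (hb : 0 < b)
    (hc : c < 2 * Real.sqrt a) :
    ¬ ∃ U V : ℝ → ℝ, IsTravelingWave a b χ τ c U V := by
  rintro ⟨U, V, h⟩
  have hV' := h.tendsto_deriv_snd
  obtain ⟨hU, -, -, -, -, -, -, -, hU0, hV0⟩ := id h
  refine not_tendsto_zero_of_pos_of_lt_two_sqrt (A := fun x => -c + χ * deriv V x)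
    (B := fun x => χ * (V x - U x - τ * c * deriv V x) - a + b * U x) ha hc
    (fun x => (hU.differentiable two_ne_zero x).hasDerivAt) h.hasDerivAt_deriv_fst ?_ ?_
    (h.pos ha hb) hU0
  · simpa using (hV'.const_mul χ).const_add (-c)
  · simpa using (((hV0.sub hU0).sub (hV'.const_mul (τ * c))).const_mul χ).sub_const a
      |>.add (hU0.const_mul b)

/-- Theorem D: no traveling wave connecting `(a/b,a/b)` and `(0,0)`
exists with speed `c < 2√a`. -/
theorem no_traveling_wave_of_speed_lt (a b τ χ c : ℝ) (ha : 0 < a) (hb : 0 < b)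
    (hτ : 0 ≤ τ) (hχ : 0 ≤ χ) (hc : c < 2 * Real.sqrt a) :
    ¬ ∃ U V : ℝ → ℝ, IsTravelingWave a b χ τ c U V :=
  no_traveling_wave_of_speed_lt_general a b τ χ c ha hb hc
end

section
/- Assume τ>0, 0<χ<1 and 0<μ<μ_τ satisfy condition (H), and set C̃₀ = a/(b−χ(1+τc_μ/2)) (the denominator is positive under (H)). Then for every C₀ ≥ C̃₀, every choice of μ̃ and d in the definition of ℰ_{τ,μ}(C₀), every u ∈ ℰ_{τ,μ}(C₀) and every x∈ℝ: (a − χ(V(x;u) − τc_μ·∂ₓV(x;u)) − (b−χ)C₀)·C₀ ≤ 0; that is, the constant function C₀ is a super-solution of the associated parabolic equation on ℝ×ℝ. -/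
open Real Filter MeasureTheory Set

/-- `c_μ = μ + a/μ`. -/
noncomputable def cmu (a μ : ℝ) : ℝ := μ + a / μ

/-- `μ_τ = √a` if `τ ≥ 1`, and `min{√a, √((1+τa)/(1−τ))}` if `0 < τ < 1`. -/
noncomputable def muTau (a τ : ℝ) : ℝ :=
  if 1 ≤ τ then Real.sqrt a else min (Real.sqrt a) (Real.sqrt ((1 + τ * a) / (1 - τ)))

/-- Condition (H) on `(τ, μ, χ)`. -/
noncomputable def condH (a b τ μ χ : ℝ) : Prop :=
  1 + τ * cmu a μ < (b - χ) / χ ∧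
  (μ + τ * cmu a μ) / Real.sqrt (1 + τ * μ * cmu a μ - μ ^ 2)
      + μ * (μ + τ * cmu a μ) / (1 + τ * μ * cmu a μ - μ ^ 2) ≤ (b - χ) / χ

/-- `V(x;u) = ∫₀^∞ ∫_ℝ (e^{−s}/√(4πs)) e^{−(x−z)²/(4s)} u(z+τcs) dz ds`. -/
noncomputable def Vfun (τ c : ℝ) (u : ℝ → ℝ) (x : ℝ) : ℝ :=
  ∫ s in Set.Ioi (0:ℝ), ∫ z : ℝ,
    (Real.exp (-s) / Real.sqrt (4 * Real.pi * s)) * Real.exp (-(x - z) ^ 2 / (4 * s))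
      * u (z + τ * c * s)

/-- `U⁺(x) = min{C₀, e^{−μx}}`. -/
noncomputable def Uplus (μ C₀ : ℝ) (x : ℝ) : ℝ := min C₀ (Real.exp (-μ * x))

/-- `U⁻(x) = max{0, e^{−μx} − d e^{−μ̃x}}`. -/
noncomputable def Uminus (μ μt d : ℝ) (x : ℝ) : ℝ :=
  max 0 (Real.exp (-μ * x) - d * Real.exp (-μt * x))

/-- `u ∈ ℰ_{τ,μ}(C₀)` (built from `μ̃` and `d`): bounded uniformly continuous with
`U⁻ ≤ u ≤ U⁺`. -/
def memE (μ C₀ μt d : ℝ) (u : ℝ → ℝ) : Prop :=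
  UniformContinuous u ∧ ∀ x, Uminus μ μt d x ≤ u x ∧ u x ≤ Uplus μ C₀ x

/-!
Write `V(x;u) = ∫₀^∞ e^{-s} ∫ G_s(x - z) u(z + τc_μ s) dz ds` with the heat kernel `G_s`.
Then `V ≥ 0` because `u ≥ 0`, and differentiating under both integrals puts the derivative on
`G_s`. Since `G_s'` is odd, `u` may be replaced by `u - C₀/2`, which is bounded by `C₀/2`; so the
inner integral is at most `(C₀/2)‖G_s'‖₁ = C₀/√(4πs)`, and `∫₀^∞ e^{-s}/√(4πs) ds = Γ(1/2)/(2√π)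
= 1/2` gives `∂ₓV ≤ C₀/2`. The claim then reduces to `a ≤ (b - χ(1 + τc_μ/2)) C₀`, which is the
choice of `C₀`.
-/

theorem integral_Ioi_mul_exp_neg_mul_sq {b : ℝ} (hb : 0 < b) :
    ∫ r in Ioi (0 : ℝ), r * exp (-b * r ^ 2) = (2 * b)⁻¹ := by
  have h := integral_mul_cexp_neg_mul_sq (b := (b : ℂ)) (by simpa using hb)
  simp_rw [← Complex.ofReal_pow, ← Complex.ofReal_neg, ← Complex.ofReal_mul,
    ← Complex.ofReal_exp, ← Complex.ofReal_mul, integral_complex_ofReal] at h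
  exact_mod_cast h

theorem integrable_abs_mul_exp_neg_mul_sq {b : ℝ} (hb : 0 < b) :
    Integrable fun t : ℝ => |t| * exp (-b * t ^ 2) := by
  simpa [abs_mul, abs_of_pos (exp_pos _)] using (integrable_mul_exp_neg_mul_sq hb).abs

theorem integral_abs_mul_exp_neg_mul_sq {b : ℝ} (hb : 0 < b) :
    ∫ t, |t| * exp (-b * t ^ 2) = b⁻¹ := by
  have h := integral_comp_abs (f := fun t : ℝ => t * exp (-b * t ^ 2))
  simp only [sq_abs] at h
  rw [h, integral_Ioi_mul_exp_neg_mul_sq hb]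
  field_simp

theorem abs_mul_exp_neg_mul_sq_le {b t t₀ : ℝ} (hb : 0 ≤ b) (h : |t - t₀| ≤ 1) :
    |t| * exp (-b * t ^ 2) ≤ exp b * ((|t₀| + 1) * exp (-(b / 2) * t₀ ^ 2)) := by
  have habs : |t| ≤ |t₀| + 1 := by
    linarith [abs_sub_abs_le_abs_sub t t₀]
  have hsq : t₀ ^ 2 ≤ 2 * t ^ 2 + 2 := by
    nlinarith [sq_abs (t - t₀), abs_nonneg (t - t₀), sq_nonneg (t + (t - t₀))]
  have hexp : exp (-b * t ^ 2) ≤ exp b * exp (-(b / 2) * t₀ ^ 2) := by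
    rw [← exp_add]; gcongr; nlinarith
  calc |t| * exp (-b * t ^ 2) ≤ (|t₀| + 1) * (exp b * exp (-(b / 2) * t₀ ^ 2)) := by
        gcongr
    _ = _ := by ring

theorem integrable_abs_add_one_mul_exp_neg_mul_sq {b : ℝ} (hb : 0 < b) :
    Integrable fun t : ℝ => (|t| + 1) * exp (-b * t ^ 2) := by
  simp_rw [add_mul, one_mul]
  exact (integrable_abs_mul_exp_neg_mul_sq hb).add (integrable_exp_neg_mul_sq hb)

noncomputable def heatKernel (s t : ℝ) : ℝ := exp (-t ^ 2 / (4 * s)) / √(4 * π * s)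

noncomputable def heatKernelDeriv (s t : ℝ) : ℝ := -t / (2 * s) * heatKernel s t

section HeatKernel

variable {s : ℝ}

theorem heatKernel_nonneg (s t : ℝ) : 0 ≤ heatKernel s t := by
  unfold heatKernel; positivity

theorem heatKernel_eq (s t : ℝ) :
    heatKernel s t = (√(4 * π * s))⁻¹ * exp (-(4 * s)⁻¹ * t ^ 2) := by
  rw [heatKernel, div_eq_inv_mul, neg_div, div_eq_inv_mul, neg_mul]

theorem heatKernelDeriv_eq (s t : ℝ) :
    heatKernelDeriv s t = -((2 * s)⁻¹ * (√(4 * π * s))⁻¹) * (t * exp (-(4 * s)⁻¹ * t ^ 2)) := by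
  rw [heatKernelDeriv, heatKernel_eq]; ring

theorem measurable_heatKernel : Measurable (Function.uncurry heatKernel) := by
  unfold Function.uncurry heatKernel; fun_prop

theorem measurable_heatKernelDeriv : Measurable (Function.uncurry heatKernelDeriv) := by
  unfold Function.uncurry heatKernelDeriv heatKernel; fun_prop

theorem hasDerivAt_heatKernel (s t : ℝ) : HasDerivAt (heatKernel s) (heatKernelDeriv s t) t := by
  have h := (((hasDerivAt_pow 2 t).fun_neg.div_const (4 * s)).exp).div_const (√(4 * π * s))
  refine h.congr_deriv ?_
  rw [heatKernelDeriv, heatKernel]; ring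

theorem integrable_heatKernel (hs : 0 < s) : Integrable (heatKernel s) := by
  simp_rw [funext (heatKernel_eq s)]
  exact (integrable_exp_neg_mul_sq (by positivity)).const_mul _

theorem integral_heatKernel (hs : 0 < s) : ∫ t, heatKernel s t = 1 := by
  simp_rw [heatKernel_eq, integral_const_mul, integral_gaussian]
  rw [show π / (4 * s)⁻¹ = 4 * π * s by field_simp]
  exact inv_mul_cancel₀ (sqrt_pos.mpr (by positivity)).ne'

theorem integral_heatKernelDeriv (s : ℝ) : ∫ t, heatKernelDeriv s t = 0 := by
  have hodd : ∀ t, heatKernelDeriv s (-t) = -heatKernelDeriv s t := fun t => by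
    simp only [heatKernelDeriv, heatKernel, neg_sq]; ring
  have h := integral_neg_eq_self (heatKernelDeriv s) volume
  rw [funext hodd, integral_neg] at h
  linarith

theorem integrable_heatKernelDeriv (hs : 0 < s) : Integrable (heatKernelDeriv s) := by
  simp_rw [funext (heatKernelDeriv_eq s)]
  exact (integrable_mul_exp_neg_mul_sq (by positivity)).const_mul _

theorem integral_abs_heatKernelDeriv (hs : 0 < s) :
    ∫ t, |heatKernelDeriv s t| = 2 / √(4 * π * s) := by
  simp_rw [heatKernelDeriv_eq, abs_mul, abs_neg, abs_of_pos (exp_pos _),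
    abs_of_pos (by positivity : 0 < (2 * s)⁻¹ * (√(4 * π * s))⁻¹), integral_const_mul]
  rw [integral_abs_mul_exp_neg_mul_sq (by positivity)]
  field_simp
  ring

end HeatKernel

section HeatConvolution

variable {s C : ℝ} {v : ℝ → ℝ}

theorem abs_heatKernelDeriv_le (hs : 0 < s) {t t₀ : ℝ} (h : |t - t₀| ≤ 1) :
    |heatKernelDeriv s t| ≤ (2 * s)⁻¹ * (√(4 * π * s))⁻¹ * exp (4 * s)⁻¹ *
      ((|t₀| + 1) * exp (-((4 * s)⁻¹ / 2) * t₀ ^ 2)) := by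
  rw [heatKernelDeriv_eq, abs_mul, abs_neg,
    abs_of_pos (by positivity : 0 < (2 * s)⁻¹ * (√(4 * π * s))⁻¹), abs_mul,
    abs_of_pos (exp_pos _), mul_assoc _ (exp _)]
  exact mul_le_mul_of_nonneg_left (abs_mul_exp_neg_mul_sq_le (by positivity) h) (by positivity)

theorem integrable_heatKernel_mul (hs : 0 < s) (hv : AEStronglyMeasurable v)
    (hvC : ∀ z, |v z| ≤ C) (x : ℝ) : Integrable fun z => heatKernel s (x - z) * v z :=
  ((integrable_heatKernel hs).comp_sub_left x).mul_bdd hv (ae_of_all _ hvC)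

theorem integrable_heatKernelDeriv_mul (hs : 0 < s) (hv : AEStronglyMeasurable v)
    (hvC : ∀ z, |v z| ≤ C) (x : ℝ) : Integrable fun z => heatKernelDeriv s (x - z) * v z :=
  ((integrable_heatKernelDeriv hs).comp_sub_left x).mul_bdd hv (ae_of_all _ hvC)

theorem abs_integral_heatKernel_mul_le (hs : 0 < s) (hvC : ∀ z, |v z| ≤ C) (x : ℝ) :
    |∫ z, heatKernel s (x - z) * v z| ≤ C :=
  calc |∫ z, heatKernel s (x - z) * v z|
      ≤ ∫ z, heatKernel s (x - z) * C :=
        norm_integral_le_of_norm_le (f := fun z => heatKernel s (x - z) * v z)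
          (((integrable_heatKernel hs).comp_sub_left x).mul_const C)
          (ae_of_all _ fun z => by
            rw [norm_mul, norm_of_nonneg (heatKernel_nonneg _ _)]
            exact mul_le_mul_of_nonneg_left (hvC z) (heatKernel_nonneg _ _))
    _ = C := by
      rw [integral_mul_const, integral_sub_left_eq_self (heatKernel s), integral_heatKernel hs,
        one_mul]

theorem abs_integral_heatKernelDeriv_mul_le (hs : 0 < s) (hvC : ∀ z, |v z| ≤ C) (x : ℝ) :
    |∫ z, heatKernelDeriv s (x - z) * v z| ≤ 2 * C / √(4 * π * s) :=
  calc |∫ z, heatKernelDeriv s (x - z) * v z|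
      ≤ ∫ z, |heatKernelDeriv s (x - z)| * C :=
        norm_integral_le_of_norm_le (f := fun z => heatKernelDeriv s (x - z) * v z)
          (((integrable_heatKernelDeriv hs).abs.comp_sub_left x).mul_const C)
          (ae_of_all _ fun z => by
            rw [norm_mul]
            exact mul_le_mul_of_nonneg_left (hvC z) (abs_nonneg _))
    _ = 2 * C / √(4 * π * s) := by
      rw [integral_mul_const, integral_sub_left_eq_self (fun t => |heatKernelDeriv s t|),
        integral_abs_heatKernelDeriv hs]
      ring

theorem integral_heatKernelDeriv_mul_le (hs : 0 < s) (hv : AEStronglyMeasurable v)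
    (hv0 : ∀ z, 0 ≤ v z) (hvC : ∀ z, v z ≤ C) (x : ℝ) :
    ∫ z, heatKernelDeriv s (x - z) * v z ≤ C / √(4 * π * s) := by
  have hcentered : ∫ z, heatKernelDeriv s (x - z) * v z
      = ∫ z, heatKernelDeriv s (x - z) * (v z - C / 2) := by
    have hvC' : ∀ z, |v z| ≤ C := fun z => (abs_of_nonneg (hv0 z)).trans_le (hvC z)
    simp_rw [mul_sub]
    rw [integral_sub (integrable_heatKernelDeriv_mul hs hv hvC' x)
      (((integrable_heatKernelDeriv hs).comp_sub_left x).mul_const _), integral_mul_const,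
      integral_sub_left_eq_self (heatKernelDeriv s), integral_heatKernelDeriv, zero_mul,
      sub_zero]
  have hbound := abs_integral_heatKernelDeriv_mul_le hs (C := C / 2) (v := fun z => v z - C / 2)
    (fun z => abs_le.mpr ⟨by linarith [hv0 z], by linarith [hvC z]⟩) x
  rw [hcentered]
  linarith [le_abs_self (∫ z, heatKernelDeriv s (x - z) * (v z - C / 2)),
    show 2 * (C / 2) / √(4 * π * s) = C / √(4 * π * s) by ring]

theorem hasDerivAt_integral_heatKernel_mul (hs : 0 < s) (hv : AEStronglyMeasurable v)
    (hvC : ∀ z, |v z| ≤ C) (x : ℝ) :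
    HasDerivAt (fun y => ∫ z, heatKernel s (y - z) * v z)
      (∫ z, heatKernelDeriv s (x - z) * v z) x := by
  set K := (2 * s)⁻¹ * (√(4 * π * s))⁻¹ * exp (4 * s)⁻¹
  have hbound : ∀ z, ∀ y ∈ Metric.ball x 1,
      ‖heatKernelDeriv s (y - z) * v z‖
        ≤ K * ((|x - z| + 1) * exp (-((4 * s)⁻¹ / 2) * (x - z) ^ 2)) * C := by
    intro z y hy
    rw [norm_mul, Real.norm_eq_abs, Real.norm_eq_abs]
    have hyx : |(y - z) - (x - z)| ≤ 1 := by
      rw [sub_sub_sub_cancel_right, ← Real.dist_eq]; exact (Metric.mem_ball.mp hy).le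
    exact mul_le_mul (abs_heatKernelDeriv_le hs hyx) (hvC z) (abs_nonneg _) (by positivity)
  refine (hasDerivAt_integral_of_dominated_loc_of_deriv_le (Metric.ball_mem_nhds x one_pos)
    (Eventually.of_forall fun y => (integrable_heatKernel_mul hs hv hvC y).aestronglyMeasurable)
    (integrable_heatKernel_mul hs hv hvC x)
    (integrable_heatKernelDeriv_mul hs hv hvC x).aestronglyMeasurable
    (ae_of_all _ hbound) ?_
    (ae_of_all _ fun z y _ =>
      ((hasDerivAt_heatKernel s (y - z)).comp_sub_const y z).mul_const (v z))).2
  exact (((integrable_abs_add_one_mul_exp_neg_mul_sq (by positivity)).comp_sub_left x).const_mul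
    K).mul_const C

end HeatConvolution

theorem exp_neg_div_sqrt_eqOn :
    EqOn (fun s : ℝ => exp (-s) / √(4 * π * s))
      (fun s => (2 * √π)⁻¹ * (exp (-s) * s ^ ((1 : ℝ) / 2 - 1))) (Ioi 0) := by
  intro s (hs : 0 < s)
  simp only
  rw [show (1 : ℝ) / 2 - 1 = -(1 / 2) by norm_num, rpow_neg hs.le, ← sqrt_eq_rpow,
    show 4 * π * s = 2 ^ 2 * π * s by ring, sqrt_mul (by positivity), sqrt_mul (by positivity),
    sqrt_sq zero_le_two]
  field_simp

theorem integrableOn_exp_neg_div_sqrt :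
    IntegrableOn (fun s : ℝ => exp (-s) / √(4 * π * s)) (Ioi 0) :=
  IntegrableOn.congr_fun ((GammaIntegral_convergent one_half_pos).const_mul _)
    exp_neg_div_sqrt_eqOn.symm measurableSet_Ioi

theorem integral_exp_neg_div_sqrt :
    ∫ s in Ioi (0 : ℝ), exp (-s) / √(4 * π * s) = 1 / 2 := by
  rw [setIntegral_congr_fun measurableSet_Ioi exp_neg_div_sqrt_eqOn, integral_const_mul,
    ← Gamma_eq_integral one_half_pos, Gamma_one_half_eq]
  field_simp [(sqrt_pos.mpr pi_pos).ne']

noncomputable def heatPotential (w : ℝ → ℝ → ℝ) (x : ℝ) : ℝ :=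
  ∫ s in Ioi 0, exp (-s) * ∫ z, heatKernel s (x - z) * w s z

section HeatPotential

variable {w : ℝ → ℝ → ℝ} {C : ℝ}

theorem stronglyMeasurable_integral_kernel_mul {k : ℝ → ℝ → ℝ}
    (hk : Measurable (Function.uncurry k)) (hw : Measurable (Function.uncurry w)) (x : ℝ) :
    StronglyMeasurable fun s => ∫ z, k s (x - z) * w s z :=
  ((hk.comp (measurable_fst.prodMk (measurable_const.sub measurable_snd))).mul
    hw).stronglyMeasurable.integral_prod_right'

theorem integrableOn_exp_neg_mul_integral_heatKernel_mul (hw : Measurable (Function.uncurry w))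
    (hwC : ∀ s z, |w s z| ≤ C) (x : ℝ) :
    IntegrableOn (fun s => exp (-s) * ∫ z, heatKernel s (x - z) * w s z) (Ioi 0) := by
  refine Integrable.mono' ((exp_neg_integrableOn_Ioi 0 one_pos).const_mul C) ?_ ?_
  · exact (continuous_exp.comp continuous_neg).aestronglyMeasurable.mul
      (stronglyMeasurable_integral_kernel_mul measurable_heatKernel hw x).aestronglyMeasurable
  · refine (ae_restrict_iff' measurableSet_Ioi).mpr (ae_of_all _ fun s (hs : 0 < s) => ?_)
    rw [norm_mul, norm_of_nonneg (exp_pos _).le, Real.norm_eq_abs, neg_one_mul, mul_comm]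
    exact mul_le_mul_of_nonneg_right (abs_integral_heatKernel_mul_le hs (hwC s) x)
      (exp_pos _).le

theorem norm_exp_neg_mul_integral_heatKernelDeriv_mul_le (hwC : ∀ s z, |w s z| ≤ C) {s : ℝ}
    (hs : 0 < s) (x : ℝ) :
    ‖exp (-s) * ∫ z, heatKernelDeriv s (x - z) * w s z‖ ≤ 2 * C * (exp (-s) / √(4 * π * s)) := by
  rw [norm_mul, norm_of_nonneg (exp_pos _).le, Real.norm_eq_abs]
  calc exp (-s) * |∫ z, heatKernelDeriv s (x - z) * w s z|
      ≤ exp (-s) * (2 * C / √(4 * π * s)) := by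
        gcongr; exact abs_integral_heatKernelDeriv_mul_le hs (hwC s) x
    _ = 2 * C * (exp (-s) / √(4 * π * s)) := by ring

theorem integrableOn_exp_neg_mul_integral_heatKernelDeriv_mul
    (hw : Measurable (Function.uncurry w)) (hwC : ∀ s z, |w s z| ≤ C) (x : ℝ) :
    IntegrableOn (fun s => exp (-s) * ∫ z, heatKernelDeriv s (x - z) * w s z) (Ioi 0) := by
  refine Integrable.mono' (integrableOn_exp_neg_div_sqrt.const_mul (2 * C)) ?_ ?_
  · exact (continuous_exp.comp continuous_neg).aestronglyMeasurable.mul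
      (stronglyMeasurable_integral_kernel_mul measurable_heatKernelDeriv hw x).aestronglyMeasurable
  · exact (ae_restrict_iff' measurableSet_Ioi).mpr (ae_of_all _ fun s (hs : 0 < s) =>
      norm_exp_neg_mul_integral_heatKernelDeriv_mul_le hwC hs x)

theorem hasDerivAt_heatPotential (hw : Measurable (Function.uncurry w))
    (hwC : ∀ s z, |w s z| ≤ C) (x : ℝ) :
    HasDerivAt (heatPotential w)
      (∫ s in Ioi 0, exp (-s) * ∫ z, heatKernelDeriv s (x - z) * w s z) x := by
  have hws : ∀ s, AEStronglyMeasurable (w s) :=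
    fun s => (hw.comp measurable_prodMk_left).aestronglyMeasurable
  refine (hasDerivAt_integral_of_dominated_loc_of_deriv_le (Metric.ball_mem_nhds x one_pos)
    (Eventually.of_forall fun y =>
      (integrableOn_exp_neg_mul_integral_heatKernel_mul hw hwC y).aestronglyMeasurable)
    (integrableOn_exp_neg_mul_integral_heatKernel_mul hw hwC x)
    (integrableOn_exp_neg_mul_integral_heatKernelDeriv_mul hw hwC x).aestronglyMeasurable
    ((ae_restrict_iff' measurableSet_Ioi).mpr (ae_of_all _ fun s (hs : 0 < s) y _ =>
      norm_exp_neg_mul_integral_heatKernelDeriv_mul_le hwC hs y))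
    (integrableOn_exp_neg_div_sqrt.const_mul (2 * C))
    ((ae_restrict_iff' measurableSet_Ioi).mpr (ae_of_all _ fun s (hs : 0 < s) y _ =>
      (hasDerivAt_integral_heatKernel_mul hs (hws s) (hwC s) y).const_mul _))).2

theorem heatPotential_nonneg (hw0 : ∀ s z, 0 ≤ w s z) (x : ℝ) : 0 ≤ heatPotential w x :=
  setIntegral_nonneg measurableSet_Ioi fun s _ => mul_nonneg (exp_pos _).le
    (integral_nonneg fun z => mul_nonneg (heatKernel_nonneg _ _) (hw0 s z))

theorem integral_exp_neg_mul_integral_heatKernelDeriv_mul_le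
    (hw : Measurable (Function.uncurry w)) (hw0 : ∀ s z, 0 ≤ w s z) (hwC : ∀ s z, w s z ≤ C)
    (x : ℝ) :
    ∫ s in Ioi 0, exp (-s) * ∫ z, heatKernelDeriv s (x - z) * w s z ≤ C / 2 := by
  have hwC' : ∀ s z, |w s z| ≤ C := fun s z => (abs_of_nonneg (hw0 s z)).trans_le (hwC s z)
  calc ∫ s in Ioi 0, exp (-s) * ∫ z, heatKernelDeriv s (x - z) * w s z
      ≤ ∫ s in Ioi 0, C * (exp (-s) / √(4 * π * s)) := by
        refine setIntegral_mono_on (integrableOn_exp_neg_mul_integral_heatKernelDeriv_mul hw hwC' x)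
          (integrableOn_exp_neg_div_sqrt.const_mul C) measurableSet_Ioi fun s (hs : 0 < s) => ?_
        rw [← mul_div_assoc, mul_comm C, mul_div_assoc]
        exact mul_le_mul_of_nonneg_left (integral_heatKernelDeriv_mul_le hs
          (hw.comp measurable_prodMk_left).aestronglyMeasurable (hw0 s) (hwC s) x) (exp_pos _).le
    _ = C / 2 := by rw [integral_const_mul, integral_exp_neg_div_sqrt]; ring

end HeatPotential

theorem Vfun_eq_heatPotential (τ c : ℝ) (u : ℝ → ℝ) :
    Vfun τ c u = heatPotential fun s z => u (z + τ * c * s) := by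
  funext x
  unfold Vfun heatPotential heatKernel
  congr 1 with s
  rw [← integral_const_mul]
  congr 1 with z
  ring

theorem const_supersolution_general (a b τ χ μ : ℝ) (ha : 0 < a)
    (hτ : 0 < τ) (hχ0 : 0 < χ)
    (hμ0 : 0 < μ) (hH : condH a b τ μ χ)
    (C₀ : ℝ) (hC₀ : a / (b - χ * (1 + τ * cmu a μ / 2)) ≤ C₀)
    (μt d : ℝ)
    (u : ℝ → ℝ) (hu : memE μ C₀ μt d u) :
    ∀ x : ℝ,
      (a - χ * (Vfun τ (cmu a μ) u x - τ * cmu a μ * deriv (Vfun τ (cmu a μ) u) x)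
        - (b - χ) * C₀) * C₀ ≤ 0 := by
  intro x
  set c := cmu a μ
  obtain ⟨hu_cont, hu_bounds⟩ := hu
  have hu0 : ∀ s z, 0 ≤ u (z + τ * c * s) := fun s z => (le_max_left _ _).trans (hu_bounds _).1
  have huC : ∀ s z, u (z + τ * c * s) ≤ C₀ := fun s z => (hu_bounds _).2.trans (min_le_left _ _)
  have hw : Measurable (Function.uncurry fun s z => u (z + τ * c * s)) :=
    hu_cont.continuous.measurable.comp (by fun_prop)
  have hV : 0 ≤ Vfun τ c u x := by
    rw [Vfun_eq_heatPotential]; exact heatPotential_nonneg hu0 x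
  have hV' : deriv (Vfun τ c u) x ≤ C₀ / 2 := by
    rw [Vfun_eq_heatPotential, (hasDerivAt_heatPotential hw
      (fun s z => (abs_of_nonneg (hu0 s z)).trans_le (huC s z)) x).deriv]
    exact integral_exp_neg_mul_integral_heatKernelDeriv_mul_le hw hu0 huC x
  have hc : 0 < c := add_pos hμ0 (div_pos ha hμ0)
  have hden : 0 < b - χ * (1 + τ * c / 2) := by
    have := (lt_div_iff₀ hχ0).mp hH.1
    nlinarith [mul_pos hτ hc]
  have haC₀ : a ≤ (b - χ * (1 + τ * c / 2)) * C₀ := by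
    rwa [div_le_iff₀' hden] at hC₀
  refine mul_nonpos_of_nonpos_of_nonneg ?_ ((hu0 0 0).trans (huC 0 0))
  nlinarith [mul_nonneg hχ0.le hV, mul_le_mul_of_nonneg_left hV' (mul_pos hχ0 (mul_pos hτ hc)).le]

/-- under condition (H), for `C₀ ≥ C̃₀ = a/(b−χ(1+τc_μ/2))` the
constant `C₀` is a super-solution: `(a − χ(V(x;u) − τc_μ V'(x;u)) − (b−χ)C₀)·C₀ ≤ 0`. -/
theorem const_supersolution (a b τ χ μ : ℝ) (ha : 0 < a) (hb : 0 < b)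
    (hτ : 0 < τ) (hχ0 : 0 < χ) (hχ1 : χ < 1)
    (hμ0 : 0 < μ) (hμ : μ < muTau a τ) (hH : condH a b τ μ χ)
    (C₀ : ℝ) (hC₀ : a / (b - χ * (1 + τ * cmu a μ / 2)) ≤ C₀)
    (μt d : ℝ) (hμt₁ : μ < μt) (hμt₂ : μt < min (2 * μ) (muTau a τ))
    (hd : max 1 (C₀ ^ ((μ - μt) / μ)) < d)
    (u : ℝ → ℝ) (hu : memE μ C₀ μt d u) :
    ∀ x : ℝ,
      (a - χ * (Vfun τ (cmu a μ) u x - τ * cmu a μ * deriv (Vfun τ (cmu a μ) u) x)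
        - (b - χ) * C₀) * C₀ ≤ 0 :=
  const_supersolution_general a b τ χ μ ha hτ hχ0 hμ0 hH C₀ hC₀ μt d u hu
end
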